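/- arXiv:1708.01903 — 4 statements merged into one kernel-verified Lean document; each statement's English description precedes it below -/
import Mathlib

section
/- Suppose a graph G = (V, E) has a non-blocking 2D grid-obstacle representation: an injective placement φ: V → Z^2 and an obstacle set O ⊆ Z^2 disjoint from φ(V), such that (u,v) ∈ E iff there is an xy-monotone grid path from φ(u) to φ(v) avoiding O (vertex points do not block). Then E can be written as E_b ∪ E_r (possibly overlapping) such that both (V, E_b) and (V, E_r) are comparability graphs. -/
/-- A single grid step in ℤ²: consecutive points differ by 1 in exactly one coordinate. -/
def GridStep (p q : ℤ × ℤ) : Prop := |q.1 - p.1| + |q.2 - p.2| = 1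

/-- A grid path in ℤ²: a nonempty finite sequence of lattice points with unit axis steps. -/
def IsGridPath (l : List (ℤ × ℤ)) : Prop := l ≠ [] ∧ l.Chain' GridStep

/-- Both coordinates weakly nondecreasing along the path. -/
def NondecPath (l : List (ℤ × ℤ)) : Prop := l.Chain' (fun p q => p.1 ≤ q.1 ∧ p.2 ≤ q.2)

/-- xy-monotone: each coordinate is weakly monotone (in some direction) along the path. -/
def XYMono (l : List (ℤ × ℤ)) : Prop :=
  (l.Chain' (fun p q => p.1 ≤ q.1) ∨ l.Chain' (fun p q => q.1 ≤ p.1)) ∧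
  (l.Chain' (fun p q => p.2 ≤ q.2) ∨ l.Chain' (fun p q => q.2 ≤ p.2))

/-- The path contains no obstacle point. -/
def AvoidsObstacles (O : Set (ℤ × ℤ)) (l : List (ℤ × ℤ)) : Prop := ∀ p ∈ l, p ∉ O

/-- There is an xy-monotone grid path from p to q avoiding the obstacle set O. -/
def MonoAvoidReach (O : Set (ℤ × ℤ)) (p q : ℤ × ℤ) : Prop :=
  ∃ l : List (ℤ × ℤ), IsGridPath l ∧ XYMono l ∧ AvoidsObstacles O l ∧
    l.head? = some p ∧ l.getLast? = some q

/-- A comparability graph: edges can be oriented as a transitive DAG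
(a strict partial order whose comparability relation is the adjacency). -/
def IsComparabilityGraph {V : Type*} (H : SimpleGraph V) : Prop :=
  ∃ r : V → V → Prop, (∀ u, ¬ r u u) ∧ (∀ u v w, r u v → r v w → r u w) ∧
    (∀ u v, H.Adj u v ↔ (r u v ∨ r v u))

/-!
Orient every path of the representation so that `x` is weakly increasing; it then either
increases `y` weakly (blue) or decreases it weakly (red). For each colour, reachability by such
paths avoiding `O` is transitive (concatenate paths) and antisymmetric (it implies
`p.1 ≤ q.1` and `p.2 ≤ q.2`, resp. `q.2 ≤ p.2`), so pulled back along the injective placement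
it is a strict partial order whose comparability graph is the set of edges of that colour.
-/

theorem List.IsChain.and {α : Type*} {R S : α → α → Prop} {l : List α}
    (hR : l.IsChain R) (hS : l.IsChain S) : l.IsChain fun a b => R a b ∧ S a b :=
  isChain_iff_getElem.2 fun i hi => ⟨isChain_iff_getElem.1 hR i hi, isChain_iff_getElem.1 hS i hi⟩

section ChainReach

variable {α : Type*} {S : α → α → Prop} {O : Set α} {p q r : α}

def ChainReach (S : α → α → Prop) (O : Set α) (p q : α) : Prop :=
  ∃ l : List α, l.IsChain S ∧ (∀ x ∈ l, x ∉ O) ∧ l.head? = some p ∧ l.getLast? = some q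

theorem ChainReach.trans (hpq : ChainReach S O p q) (hqr : ChainReach S O q r) :
    ChainReach S O p r := by
  obtain ⟨l₁, hc₁, hO₁, hp, hq⟩ := hpq
  obtain ⟨l₂, hc₂, hO₂, hq', hr⟩ := hqr
  obtain ⟨l₁, rfl⟩ := List.getLast?_eq_some_iff.1 hq
  obtain ⟨l₂, rfl⟩ := List.head?_eq_some_iff.1 hq'
  refine ⟨l₁ ++ q :: l₂, ?_, ?_, ?_, by simpa using hr⟩
  · rw [List.isChain_append] at hc₁ ⊢
    exact ⟨hc₁.1, hc₂, fun x hx y hy => by simp_all⟩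
  · simp only [List.mem_append, List.mem_cons] at hO₁ hO₂ ⊢
    grind
  · cases l₁ <;> simp_all

theorem ChainReach.swap (h : ChainReach S O p q) : ChainReach (Function.swap S) O q p := by
  obtain ⟨l, hc, hO, hp, hq⟩ := h
  exact ⟨l.reverse, List.isChain_reverse.2 hc, by simpa using hO, by simpa using hq,
    by simpa using hp⟩

theorem ChainReach.reflTransGen (h : ChainReach S O p q) : Relation.ReflTransGen S p q := by
  obtain ⟨l, hc, -, hp, hq⟩ := h
  obtain ⟨l, rfl⟩ := List.head?_eq_some_iff.1 hp
  exact List.relationReflTransGen_of_exists_isChain_cons l hc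
    (by simpa [List.getLast?_eq_some_getLast] using hq)

end ChainReach

theorem GridStep.symm {p q : ℤ × ℤ} (h : GridStep p q) : GridStep q p := by
  rwa [GridStep, abs_sub_comm p.1, abs_sub_comm p.2]

def EastwardStep (Dy : ℤ → ℤ → Prop) (p q : ℤ × ℤ) : Prop :=
  GridStep p q ∧ p.1 ≤ q.1 ∧ Dy p.2 q.2

section Eastward

variable {Dy : ℤ → ℤ → Prop} {O : Set (ℤ × ℤ)} {p q : ℤ × ℤ}

theorem ChainReach.eastward_le [IsPreorder ℤ Dy] (h : ChainReach (EastwardStep Dy) O p q) :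
    p.1 ≤ q.1 ∧ Dy p.2 q.2 := by
  have hreach := h.reflTransGen
  clear h
  induction hreach with
  | refl => exact ⟨le_rfl, refl _⟩
  | tail _ hstep ih => exact ⟨ih.1.trans hstep.2.1, _root_.trans ih.2 hstep.2.2⟩

theorem ChainReach.eastward_antisymm [IsPartialOrder ℤ Dy]
    (hpq : ChainReach (EastwardStep Dy) O p q) (hqp : ChainReach (EastwardStep Dy) O q p) :
    p = q :=
  Prod.ext (le_antisymm hpq.eastward_le.1 hqp.eastward_le.1)
    (antisymm hpq.eastward_le.2 hqp.eastward_le.2)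

theorem MonoAvoidReach.symm (h : MonoAvoidReach O p q) : MonoAvoidReach O q p := by
  obtain ⟨l, ⟨hne, hgrid⟩, ⟨hx, hy⟩, hO, hp, hq⟩ := h
  refine ⟨l.reverse, ⟨by simpa, List.isChain_reverse.2 (hgrid.imp fun _ _ => GridStep.symm)⟩,
    ⟨?_, ?_⟩, by simpa [AvoidsObstacles] using hO, by simpa using hq, by simpa using hp⟩
  · exact hx.symm.imp List.isChain_reverse.2 List.isChain_reverse.2
  · exact hy.symm.imp List.isChain_reverse.2 List.isChain_reverse.2

theorem ChainReach.monoAvoidReach (hDy : Dy = (· ≤ ·) ∨ Dy = (· ≥ ·))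
    (h : ChainReach (EastwardStep Dy) O p q) : MonoAvoidReach O p q := by
  obtain ⟨l, hc, hO, hp, hq⟩ := h
  refine ⟨l, ⟨by rintro rfl; simp at hp, hc.imp fun _ _ h => h.1⟩,
    ⟨.inl (hc.imp fun _ _ h => h.2.1), ?_⟩, hO, hp, hq⟩
  rcases hDy with rfl | rfl
  exacts [.inl (hc.imp fun _ _ h => h.2.2), .inr (hc.imp fun _ _ h => h.2.2)]

theorem monoAvoidReach_iff : MonoAvoidReach O p q ↔
    (ChainReach (EastwardStep (· ≤ ·)) O p q ∨ ChainReach (EastwardStep (· ≤ ·)) O q p) ∨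
      (ChainReach (EastwardStep (· ≥ ·)) O p q ∨ ChainReach (EastwardStep (· ≥ ·)) O q p) := by
  constructor
  · rintro ⟨l, ⟨-, hgrid⟩, ⟨hx | hx, hy | hy⟩, hO, hp, hq⟩
    · exact .inl <| .inl ⟨l, hgrid.and (hx.and hy), hO, hp, hq⟩
    · exact .inr <| .inl ⟨l, hgrid.and (hx.and hy), hO, hp, hq⟩
    -- an `x`-decreasing path, read backwards, is `x`-increasing with the `y`-direction flipped
    · exact .inr <| .inr <| ChainReach.swap (S := Function.swap (EastwardStep (· ≥ ·)))
        ⟨l, (hgrid.imp fun _ _ => GridStep.symm).and (hx.and hy), hO, hp, hq⟩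
    · exact .inl <| .inr <| ChainReach.swap (S := Function.swap (EastwardStep (· ≤ ·)))
        ⟨l, (hgrid.imp fun _ _ => GridStep.symm).and (hx.and hy), hO, hp, hq⟩
  · rintro ((h | h) | (h | h))
    · exact h.monoAvoidReach (.inl rfl)
    · exact (h.monoAvoidReach (.inl rfl)).symm
    · exact h.monoAvoidReach (.inr rfl)
    · exact (h.monoAvoidReach (.inr rfl)).symm

end Eastward

theorem isComparabilityGraph_fromRel {V : Type*} {r : V → V → Prop}
    (htrans : ∀ u v w, r u v → r v w → r u w) (hanti : ∀ u v, r u v → r v u → u = v) :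
    IsComparabilityGraph (SimpleGraph.fromRel r) := by
  refine ⟨fun u v => u ≠ v ∧ r u v, fun u h => h.1 rfl, ?_, ?_⟩
  · rintro u v w ⟨huv, hr₁⟩ ⟨-, hr₂⟩
    refine ⟨?_, htrans u v w hr₁ hr₂⟩
    rintro rfl
    exact huv (hanti u v hr₁ hr₂)
  · intro u v
    simp only [SimpleGraph.fromRel_adj, ne_comm (a := v)]
    tauto

theorem isComparabilityGraph_eastwardReach {V : Type*} {φ : V → ℤ × ℤ}
    (hφ : Function.Injective φ) (O : Set (ℤ × ℤ)) (Dy : ℤ → ℤ → Prop) [IsPartialOrder ℤ Dy] :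
    IsComparabilityGraph (.fromRel fun u v => ChainReach (EastwardStep Dy) O (φ u) (φ v)) :=
  isComparabilityGraph_fromRel (fun _ _ _ => ChainReach.trans)
    fun _ _ huv hvu => hφ (huv.eastward_antisymm hvu)

theorem nonblocking_rep_comparability_general {V : Type*} (G : SimpleGraph V)
    (φ : V → ℤ × ℤ) (hinj : Function.Injective φ)
    (O : Set (ℤ × ℤ))
    (hrep : ∀ u v, u ≠ v → (G.Adj u v ↔ MonoAvoidReach O (φ u) (φ v))) :
    ∃ Hb Hr : SimpleGraph V, G = Hb ⊔ Hr ∧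
      IsComparabilityGraph Hb ∧ IsComparabilityGraph Hr := by
  refine ⟨.fromRel fun u v => ChainReach (EastwardStep (· ≤ ·)) O (φ u) (φ v),
    .fromRel fun u v => ChainReach (EastwardStep (· ≥ ·)) O (φ u) (φ v), ?_,
    isComparabilityGraph_eastwardReach hinj O _, isComparabilityGraph_eastwardReach hinj O _⟩
  ext u v
  rcases eq_or_ne u v with rfl | huv
  · simp
  · simp [hrep u v huv, monoAvoidReach_iff, huv]

/-- If G has a non-blocking 2D grid-obstacle representation, then its edge set can be
written as a union of two (possibly overlapping) comparability graphs. -/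
theorem nonblocking_rep_comparability {V : Type*} [Fintype V] (G : SimpleGraph V)
    (φ : V → ℤ × ℤ) (hinj : Function.Injective φ)
    (O : Set (ℤ × ℤ)) (hO : ∀ v, φ v ∉ O)
    (hrep : ∀ u v, u ≠ v → (G.Adj u v ↔ MonoAvoidReach O (φ u) (φ v))) :
    ∃ Hb Hr : SimpleGraph V, G = Hb ⊔ Hr ∧
      IsComparabilityGraph Hb ∧ IsComparabilityGraph Hr :=
  nonblocking_rep_comparability_general G φ hinj O hrep
end

section
/- Place vertex v_i of the complete graph K_n at point (i,i,i) in Z^3 for i = 1,...,n, and for i < j route the edge (v_i, v_j) along the path (i,i,i)–(j,i,i)–(j,i,j)–(j,j,j) (three axis-parallel segments). Then every such edge path is coordinatewise monotone (weakly nondecreasing in x, y, and z), and the interiors of two edge paths (excluding shared endpoints) intersect only if the edges share an endpoint. -/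
/-- Parametrization of the edge path of (v_i,v_j), i < j, in the K_n construction:
(i,i,i) → (j,i,i) → (j,i,j) → (j,j,j), for t ∈ [0, 3(j-i)]. -/
def edgePathK (i j t : ℤ) : ℤ × ℤ × ℤ :=
  if t ≤ j - i then (i + t, i, i)
  else if t ≤ 2 * (j - i) then (j, i, i + (t - (j - i)))
  else (j, i + (t - 2 * (j - i)), j)

/-- The set of lattice points on the edge path of (v_i,v_j). -/
def edgeSetK (i j : ℤ) : Set (ℤ × ℤ × ℤ) := edgePathK i j '' Set.Icc 0 (3 * (j - i))

lemma edgeSetK_char {i j : ℤ} {p : ℤ × ℤ × ℤ} (hp : p ∈ edgeSetK i j) :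
    (p.2.1 = i ∧ p.2.2 = i) ∨ (p.1 = j ∧ p.2.1 = i) ∨ (p.1 = j ∧ p.2.2 = j) := by
  obtain ⟨t, _, rfl⟩ := hp
  unfold edgePathK
  split_ifs <;> simp

/-- In the K_n construction, every edge path is weakly nondecreasing in x, y and z,
and the interiors (edge path minus its two endpoints) of the paths of two edges
that share no endpoint are disjoint. -/
theorem Kn_paths_monotone_and_interior_disjoint :
    (∀ i j s t : ℤ, i < j → 0 ≤ s → s ≤ t → t ≤ 3 * (j - i) →
      (edgePathK i j s).1 ≤ (edgePathK i j t).1 ∧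
      (edgePathK i j s).2.1 ≤ (edgePathK i j t).2.1 ∧
      (edgePathK i j s).2.2 ≤ (edgePathK i j t).2.2) ∧
    (∀ i j i' j' : ℤ, i < j → i' < j' → i ≠ i' → i ≠ j' → j ≠ i' → j ≠ j' →
      Disjoint (edgeSetK i j \ {(i, i, i), (j, j, j)})
               (edgeSetK i' j' \ {(i', i', i'), (j', j', j')})) := by
  constructor
  · intro i j s t hij hs hst ht
    unfold edgePathK
    split_ifs <;> refine ⟨?_, ?_, ?_⟩ <;> simp <;> omega
  · intro i j i' j' hij hij' h1 h2 h3 h4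
    rw [Set.disjoint_left]
    rintro p ⟨hp, -⟩ ⟨hp', -⟩
    rcases edgeSetK_char hp with ⟨a, b⟩ | ⟨a, b⟩ | ⟨a, b⟩ <;>
      rcases edgeSetK_char hp' with ⟨c, d⟩ | ⟨c, d⟩ | ⟨c, d⟩ <;> omega
end

section
/- For the complete bipartite graph K_{ℓ,k}, place vertex a_i at (0,i,0) for i=1,...,ℓ and vertex b_j at (j,0,1) for j=1,...,k, and route edge (a_i,b_j) along the path (0,i,0)–(j,i,0)–(j,i,1)–(j,0,1). Then each edge path is monotone in each coordinate (nondecreasing in x and z, nonincreasing in y), and two distinct edge paths share a lattice point other than a common endpoint only if the edges share an endpoint. -/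
/-- Parametrization of the edge path of (a_i,b_j) in the bipartite 3D construction:
(0,i,0) → (j,i,0) → (j,i,1) → (j,0,1), for t ∈ [0, j+1+i]. -/
def edgePathB (i j t : ℤ) : ℤ × ℤ × ℤ :=
  if t ≤ j then (t, i, 0)
  else if t ≤ j + 1 then (j, i, t - j)
  else (j, i - (t - j - 1), 1)

/-- The set of lattice points on the edge path of (a_i,b_j). -/
def edgeSetB (i j : ℤ) : Set (ℤ × ℤ × ℤ) := edgePathB i j '' Set.Icc 0 (j + 1 + i)

/-- In the K_{ℓ,k} construction, every edge path is nondecreasing in x and z and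
nonincreasing in y, and two edge paths sharing no endpoint (i ≠ i' and j ≠ j')
share no lattice point at all. -/
theorem bipartite3D_paths_monotone_and_disjoint :
    (∀ i j s t : ℤ, 1 ≤ i → 1 ≤ j → 0 ≤ s → s ≤ t → t ≤ j + 1 + i →
      (edgePathB i j s).1 ≤ (edgePathB i j t).1 ∧
      (edgePathB i j t).2.1 ≤ (edgePathB i j s).2.1 ∧
      (edgePathB i j s).2.2 ≤ (edgePathB i j t).2.2) ∧
    (∀ i j i' j' : ℤ, 1 ≤ i → 1 ≤ j → 1 ≤ i' → 1 ≤ j' → i ≠ i' → j ≠ j' →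
      Disjoint (edgeSetB i j) (edgeSetB i' j')) := by
  constructor
  · intro i j s t hi hj hs hst ht
    unfold edgePathB
    split_ifs <;> simp <;> omega
  · intro i j i' j' hi hj hi' hj' hii hjj
    rw [Set.disjoint_left]
    rintro p ⟨s, hs, rfl⟩ ⟨t, ht, heq⟩
    simp only [Set.mem_Icc] at hs ht
    unfold edgePathB at heq
    split_ifs at heq <;> simp [Prod.ext_iff] at heq <;> omega
end

section
/- Let Γ be a visibility representation of a planar graph G in which each vertex bar splits into a left part (where all edges to lower vertices attach) and a right part (where all edges to higher vertices attach), with all bars at pairwise distinct y-coordinates. Place each vertex point between the two parts of its bar (after doubling the grid) and make all grid points not on bars or edge segments obstacles, with vertex points blocking. Then for any two vertices u, v: there is an xy-monotone grid path from the point of u to the point of v avoiding obstacles and other vertex points if and only if (u,v) ∈ E. -/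
/-- The free (non-obstacle) lattice points of the doubled visibility representation of
a planar graph: doubled horizontal bars and doubled vertical edge segments (edges
oriented from the lower to the higher endpoint). -/
def VisFreeP {V : Type*} (Adj : V → V → Prop)
    (bary barlo barhi : V → ℤ) (ec : V → V → ℤ) : Set (ℤ × ℤ) :=
  {p | (∃ v, p.2 = 2 * bary v ∧ 2 * barlo v ≤ p.1 ∧ p.1 ≤ 2 * barhi v) ∨
       (∃ u v, Adj u v ∧ bary u < bary v ∧ p.1 = 2 * ec u v ∧
          2 * bary u ≤ p.2 ∧ p.2 ≤ 2 * bary v)}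

theorem gridStep_iff {p q : ℤ × ℤ} :
    GridStep p q ↔ (q.1 = p.1 ∧ (q.2 = p.2 + 1 ∨ q.2 = p.2 - 1)) ∨
      (q.2 = p.2 ∧ (q.1 = p.1 + 1 ∨ q.1 = p.1 - 1)) := by
  unfold GridStep
  rcases abs_cases (q.1 - p.1) with ⟨h1, _⟩ | ⟨h1, _⟩ <;>
    rcases abs_cases (q.2 - p.2) with ⟨h2, _⟩ | ⟨h2, _⟩ <;> omega

theorem gridStep_comm {p q : ℤ × ℤ} : GridStep p q ↔ GridStep q p := by
  simp only [GridStep, abs_sub_comm]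

theorem GridStep.eq_up_or_horizontal {p q : ℤ × ℤ} (h : GridStep p q) (hy : p.2 ≤ q.2) :
    q = (p.1, p.2 + 1) ∨ q.2 = p.2 ∧ (q.1 = p.1 + 1 ∨ q.1 = p.1 - 1) := by
  rw [gridStep_iff] at h
  rw [Prod.ext_iff]
  omega

theorem IsGridPath.reverse {l : List (ℤ × ℤ)} (h : IsGridPath l) : IsGridPath l.reverse :=
  ⟨by simpa using h.1, List.isChain_reverse.2 (h.2.imp fun _ _ => gridStep_comm.1)⟩

theorem XYMono.reverse {l : List (ℤ × ℤ)} (h : XYMono l) : XYMono l.reverse :=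
  ⟨h.1.symm.imp List.isChain_reverse.2 List.isChain_reverse.2,
    h.2.symm.imp List.isChain_reverse.2 List.isChain_reverse.2⟩

theorem NondecPath.xyMono {l : List (ℤ × ℤ)} (h : NondecPath l) : XYMono l :=
  ⟨Or.inl (h.imp fun _ _ => And.left), Or.inl (h.imp fun _ _ => And.right)⟩

theorem List.IsChain.mem_Icc_of_mem {α β : Type*} [Preorder β] {f : α → β} {l : List α}
    {a b x : α} (h : l.IsChain fun x y => f x ≤ f y) (ha : l.head? = some a)
    (hb : l.getLast? = some b) (hx : x ∈ l) : f x ∈ Set.Icc (f a) (f b) := by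
  refine ⟨h.induction (fun x => f a ≤ f x) l (fun _ _ => flip le_trans) (fun hl => ?_) x hx,
    h.backwards_induction (fun x => f x ≤ f b) l (fun _ _ => le_trans) (fun hl => ?_) x hx⟩
  · rw [List.head?_eq_some_head hl, Option.some_inj] at ha
    rw [ha]
  · rw [List.getLast?_eq_some_getLast hl, Option.some_inj] at hb
    rw [hb]

/-- The path from `p` taking `a` steps right, then `b` steps up, then `c` steps right. -/
def rightUpRight (p : ℤ × ℤ) (a b c : ℕ) : List (ℤ × ℤ) :=
  (List.range (a + b + c + 1)).map fun i =>
    (p.1 + (min i a + (i - (a + b)) : ℕ), p.2 + (min (i - a) b : ℕ))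

section rightUpRight

variable (p : ℤ × ℤ) (a b c : ℕ)

theorem isGridPath_rightUpRight : IsGridPath (rightUpRight p a b c) := by
  refine ⟨by simp [rightUpRight], (List.isChain_map _).2 ((List.isChain_range_succ _ _).2 ?_)⟩
  intro i _
  rw [gridStep_iff]
  push_cast
  omega

theorem nondecPath_rightUpRight : NondecPath (rightUpRight p a b c) := by
  refine (List.isChain_map _).2 ((List.isChain_range_succ _ _).2 fun i _ => ?_)
  push_cast
  constructor <;> omega

theorem head?_rightUpRight : (rightUpRight p a b c).head? = some p := by
  simp [rightUpRight, List.head?_range]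

theorem getLast?_rightUpRight :
    (rightUpRight p a b c).getLast? = some (p.1 + (a + c), p.2 + b) := by
  simp [rightUpRight, List.getLast?_range]
  omega

theorem mem_rightUpRight {q : ℤ × ℤ} (hq : q ∈ rightUpRight p a b c) :
    (q.2 = p.2 ∧ p.1 ≤ q.1 ∧ q.1 ≤ p.1 + a) ∨ (q.1 = p.1 + a ∧ p.2 ≤ q.2 ∧ q.2 ≤ p.2 + b) ∨
      (q.2 = p.2 + b ∧ p.1 + a ≤ q.1 ∧ q.1 ≤ p.1 + a + c) := by
  obtain ⟨i, hi, rfl⟩ := List.mem_map.1 hq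
  rw [List.mem_range] at hi
  push_cast
  omega

end rightUpRight

def IsFreeMonotonePath {V : Type*} (F : Set (ℤ × ℤ)) (pt : V → ℤ × ℤ) (u v : V)
    (l : List (ℤ × ℤ)) : Prop :=
  IsGridPath l ∧ XYMono l ∧ (∀ p ∈ l, p ∈ F) ∧ (∀ w, w ≠ u → w ≠ v → pt w ∉ l) ∧
    l.head? = some (pt u) ∧ l.getLast? = some (pt v)

theorem IsFreeMonotonePath.reverse {V : Type*} {F : Set (ℤ × ℤ)} {pt : V → ℤ × ℤ} {u v : V}
    {l : List (ℤ × ℤ)} (h : IsFreeMonotonePath F pt u v l) :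
    IsFreeMonotonePath F pt v u l.reverse := by
  obtain ⟨hgrid, hmono, hfree, hblock, hhead, hlast⟩ := h
  exact ⟨hgrid.reverse, hmono.reverse, fun p hp => hfree p (List.mem_reverse.1 hp),
    fun w hv hu hw => hblock w hu hv (List.mem_reverse.1 hw),
    by rwa [List.head?_reverse], by rwa [List.getLast?_reverse]⟩

/-- A visibility representation of `G` with bars split at `px`, before doubling the grid: the
bar of `v` lies in row `bary v` between `barlo v` and `barhi v`, and an edge `uv` with
`bary u < bary v` is drawn in column `ec u v`. -/
structure SplitVisibilityRep {V : Type*} (G : SimpleGraph V) where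
  bary : V → ℤ
  barlo : V → ℤ
  barhi : V → ℤ
  px : V → ℤ
  ec : V → V → ℤ
  bary_injective : Function.Injective bary
  px_mem_bar : ∀ v, barlo v ≤ px v ∧ px v ≤ barhi v
  ec_mem_bars : ∀ u v, G.Adj u v → bary u < bary v →
    (barlo u ≤ ec u v ∧ ec u v ≤ barhi u) ∧ (barlo v ≤ ec u v ∧ ec u v ≤ barhi v)
  ec_lt_px_and_px_lt_ec : ∀ u v, G.Adj u v → bary u < bary v → ec u v < px v ∧ px u < ec u v
  ec_not_mem_bar : ∀ u v w, G.Adj u v → bary u < bary w → bary w < bary v →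
    ¬(barlo w ≤ ec u v ∧ ec u v ≤ barhi w)

namespace SplitVisibilityRep

variable {V : Type*} {G : SimpleGraph V} (R : SplitVisibilityRep G)

def free : Set (ℤ × ℤ) := VisFreeP G.Adj R.bary R.barlo R.barhi R.ec

def pt (w : V) : ℤ × ℤ := (2 * R.px w, 2 * R.bary w)

def OnBar (w : V) (p : ℤ × ℤ) : Prop :=
  p.2 = 2 * R.bary w ∧ 2 * R.barlo w ≤ p.1 ∧ p.1 ≤ 2 * R.barhi w

theorem exists_onBar_of_mem_free {q : ℤ × ℤ} (hq : q ∈ R.free) (hodd : q.1 % 2 = 1) :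
    ∃ w, R.OnBar w q := by
  rcases hq with hbar | ⟨a, b, -, -, hx, -⟩
  · exact hbar
  · omega

theorem exists_column_of_mem_free {q : ℤ × ℤ} (hq : q ∈ R.free) (hodd : q.2 % 2 = 1) :
    ∃ a b, G.Adj a b ∧ q.1 = 2 * R.ec a b ∧ 2 * R.bary a < q.2 ∧ q.2 < 2 * R.bary b := by
  rcases hq with ⟨w, hy, -⟩ | ⟨a, b, hab, -, hx, hlo, hhi⟩
  · omega
  · exact ⟨a, b, hab, hx, by omega, by omega⟩

theorem onBar_of_step {w : V} {p q : ℤ × ℤ} (hp : R.OnBar w p) (hq : q ∈ R.free)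
    (hy : q.2 = p.2) (hx : q.1 = p.1 + 1 ∨ q.1 = p.1 - 1) : R.OnBar w q := by
  obtain ⟨hpy, hplo, hphi⟩ := hp
  rcases Int.emod_two_eq_zero_or_one q.1 with heven | hodd
  · exact ⟨by omega, by omega, by omega⟩
  · obtain ⟨w', hw', hlo, hhi⟩ := R.exists_onBar_of_mem_free hq hodd
    obtain rfl : w' = w := R.bary_injective (by omega)
    exact ⟨by omega, hlo, hhi⟩

theorem eq_of_ec_mem_bar {a b w : V} (hab : G.Adj a b) (ha : R.bary a ≤ R.bary w)
    (hb : R.bary w < R.bary b) (hw : R.barlo w ≤ R.ec a b ∧ R.ec a b ≤ R.barhi w) : a = w := by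
  by_contra hne
  exact R.ec_not_mem_bar a b w hab (ha.lt_of_ne (R.bary_injective.ne hne)) hb hw

theorem exists_adj_of_step_up {w : V} {p : ℤ × ℤ} (hp : R.OnBar w p)
    (hq : (p.1, p.2 + 1) ∈ R.free) :
    ∃ b, G.Adj w b ∧ R.bary w < R.bary b ∧ p.1 = 2 * R.ec w b := by
  obtain ⟨hy, hlo, hhi⟩ := hp
  obtain ⟨a, b, hab, hx, ha, hb⟩ := R.exists_column_of_mem_free hq (by dsimp only; omega)
  dsimp only at hx ha hb
  obtain rfl : a = w := R.eq_of_ec_mem_bar hab (by omega) (by omega) ⟨by omega, by omega⟩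
  exact ⟨b, hab, by omega, hx⟩

/-- The points swept by a y-nondecreasing free path from the vertex point of `u` that meets no
vertex point other than those of `u` and `v`. -/
def InUpperStar (u v : V) (p : ℤ × ℤ) : Prop :=
  R.OnBar u p ∨
    (∃ b, G.Adj u b ∧ R.bary u < R.bary b ∧ p.1 = 2 * R.ec u b ∧
      2 * R.bary u < p.2 ∧ p.2 < 2 * R.bary b) ∨
    (∃ b, G.Adj u b ∧ R.bary u < R.bary b ∧ R.OnBar b p ∧ (p.1 < 2 * R.px b ∨ b = v))

variable {R} {u v : V} {p q : ℤ × ℤ}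

theorem inUpperStar_pt (u v : V) : R.InUpperStar u v (R.pt u) :=
  Or.inl ⟨rfl, by have := R.px_mem_bar u; simp only [pt]; omega,
    by have := R.px_mem_bar u; simp only [pt]; omega⟩

theorem InUpperStar.step_up (hp : R.InUpperStar u v p) (hq : (p.1, p.2 + 1) ∈ R.free)
    (hqv : p.2 + 1 ≤ 2 * R.bary v) : R.InUpperStar u v (p.1, p.2 + 1) := by
  rcases hp with hp | ⟨b, hub, hlt, hx, hlo, hhi⟩ | ⟨b, hub, hlt, hp, hleft⟩
  · obtain ⟨b, hub, hlt, hx⟩ := R.exists_adj_of_step_up hp hq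
    have := hp.1
    exact Or.inr (Or.inl ⟨b, hub, hlt, hx, by dsimp only; omega, by dsimp only; omega⟩)
  · rcases (show p.2 + 1 < 2 * R.bary b ∨ p.2 + 1 = 2 * R.bary b by omega) with hlt' | heq
    · exact Or.inr (Or.inl ⟨b, hub, hlt, hx, by dsimp only; omega, hlt'⟩)
    · obtain ⟨-, hlo', hhi'⟩ := R.ec_mem_bars u b hub hlt
      have := (R.ec_lt_px_and_px_lt_ec u b hub hlt).1
      exact Or.inr (Or.inr ⟨b, hub, hlt, ⟨heq, by dsimp only; omega, by dsimp only; omega⟩,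
        Or.inl (by dsimp only; omega)⟩)
  · -- the columns leaving `b` upwards start right of its vertex point, so `b = v`
    exfalso
    obtain ⟨b', hbb', hlt', hx⟩ := R.exists_adj_of_step_up hp hq
    have := (R.ec_lt_px_and_px_lt_ec b b' hbb' hlt').2
    obtain rfl : b = v := hleft.resolve_left (by omega)
    have := hp.1
    omega

theorem InUpperStar.step_horizontal (hp : R.InUpperStar u v p) (hq : q ∈ R.free)
    (hy : q.2 = p.2) (hx : q.1 = p.1 + 1 ∨ q.1 = p.1 - 1)
    (hblock : ∀ w, w ≠ u → w ≠ v → q ≠ R.pt w) : R.InUpperStar u v q := by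
  rcases hp with hp | ⟨b, hub, hlt, hpx, hlo, hhi⟩ | ⟨b, hub, hlt, hp, hleft⟩
  · exact Or.inl (R.onBar_of_step hp hq hy hx)
  · exfalso
    obtain ⟨w, hwy, hwlo, hwhi⟩ := R.exists_onBar_of_mem_free hq (by omega)
    exact R.ec_not_mem_bar u b w hub (by omega) (by omega) ⟨by omega, by omega⟩
  · refine Or.inr (Or.inr ⟨b, hub, hlt, R.onBar_of_step hp hq hy hx, ?_⟩)
    by_cases hbv : b = v
    · exact Or.inr hbv
    · have hne := hblock b (ne_of_apply_ne R.bary hlt.ne') hbv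
      have := hleft.resolve_right hbv
      have := hp.1
      simp only [pt, ne_eq, Prod.ext_iff] at hne
      omega

theorem InUpperStar.step (hp : R.InUpperStar u v p) (hpq : GridStep p q) (hy : p.2 ≤ q.2)
    (hq : q ∈ R.free) (hqv : q.2 ≤ 2 * R.bary v) (hblock : ∀ w, w ≠ u → w ≠ v → q ≠ R.pt w) :
    R.InUpperStar u v q := by
  rcases hpq.eq_up_or_horizontal hy with rfl | ⟨hy, hx⟩
  exacts [hp.step_up hq hqv, hp.step_horizontal hq hy hx hblock]

theorem adj_of_inUpperStar_pt (huv : R.bary u < R.bary v) (h : R.InUpperStar u v (R.pt v)) :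
    G.Adj u v := by
  rcases h with ⟨hy, -⟩ | ⟨b, hub, hlt, hx, hlo, hhi⟩ | ⟨b, hub, -, ⟨hy, -⟩, -⟩
  · simp only [pt] at hy
    omega
  · simp only [pt] at hx hlo hhi
    have := R.px_mem_bar v
    exact absurd ⟨by omega, by omega⟩ (R.ec_not_mem_bar u b v hub (by omega) (by omega))
  · simp only [pt] at hy
    obtain rfl : b = v := R.bary_injective (by omega)
    exact hub

theorem adj_of_isFreeMonotonePath {l : List (ℤ × ℤ)} (huv : R.bary u < R.bary v)
    (hl : IsFreeMonotonePath R.free R.pt u v l) : G.Adj u v := by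
  obtain ⟨⟨-, hgrid⟩, ⟨-, hmono⟩, hfree, hblock, hhead, hlast⟩ := hl
  have hup : l.IsChain fun p q => p.2 ≤ q.2 := by
    refine hmono.resolve_right fun hdown => ?_
    have := (List.isChain_reverse.2 hdown).mem_Icc_of_mem (f := Prod.snd)
      (by rwa [List.head?_reverse]) (by rwa [List.getLast?_reverse])
      (List.mem_reverse.2 (List.mem_of_getLast? hlast))
    simp only [pt, Set.mem_Icc] at this
    omega
  have hbound : ∀ p ∈ l, p.2 ≤ 2 * R.bary v := fun p hp =>
    (hup.mem_Icc_of_mem (f := Prod.snd) hhead hlast hp).2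
  have hstar : ∀ p ∈ l, R.InUpperStar u v p := by
    refine ((hgrid.and hup).imp_of_mem_imp (S := fun p q => (GridStep p q ∧ p.2 ≤ q.2) ∧ q ∈ l)
      fun _ _ _ hq h => ⟨h, hq⟩).induction _ l ?_ ?_
    · rintro p q ⟨⟨hpq, hy⟩, hq⟩ hp
      exact hp.step hpq hy (hfree q hq) (hbound q hq) fun w hu hv hw => hblock w hu hv (hw ▸ hq)
    · intro hne
      rw [List.head?_eq_some_head hne, Option.some_inj] at hhead
      rw [hhead]
      exact inUpperStar_pt u v
  exact R.adj_of_inUpperStar_pt huv (hstar _ (List.mem_of_getLast? hlast))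

theorem exists_isFreeMonotonePath_of_adj (hadj : G.Adj u v) (huv : R.bary u < R.bary v) :
    ∃ l, IsFreeMonotonePath R.free R.pt u v l := by
  obtain ⟨⟨hu_lo, hu_hi⟩, hv_lo, hv_hi⟩ := R.ec_mem_bars u v hadj huv
  obtain ⟨hec_v, hec_u⟩ := R.ec_lt_px_and_px_lt_ec u v hadj huv
  have hpx_u := R.px_mem_bar u
  have hpx_v := R.px_mem_bar v
  refine ⟨rightUpRight (R.pt u) (2 * (R.ec u v - R.px u)).toNat
    (2 * (R.bary v - R.bary u)).toNat (2 * (R.px v - R.ec u v)).toNat,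
    isGridPath_rightUpRight .., (nondecPath_rightUpRight ..).xyMono, fun q hq => ?_,
    fun w hwu hwv hw => ?_, head?_rightUpRight .., ?_⟩
  · simp only [pt] at hq
    rcases mem_rightUpRight _ _ _ _ hq with ⟨hy, hlo, hhi⟩ | ⟨hx, hlo, hhi⟩ | ⟨hy, hlo, hhi⟩
    · exact Or.inl ⟨u, hy, by omega, by omega⟩
    · exact Or.inr ⟨u, v, hadj, huv, by omega, hlo, by omega⟩
    · exact Or.inl ⟨v, by omega, by omega, by omega⟩
  · simp only [pt] at hw
    have hpx_w := R.px_mem_bar w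
    rcases mem_rightUpRight _ _ _ _ hw with ⟨hy, -⟩ | ⟨hx, hlo, hhi⟩ | ⟨hy, -⟩
    · exact hwu (R.bary_injective (by omega))
    · have hlt_u : R.bary u < R.bary w := (by omega : R.bary u ≤ R.bary w).lt_of_ne
        (R.bary_injective.ne hwu.symm)
      have hlt_v : R.bary w < R.bary v := (by omega : R.bary w ≤ R.bary v).lt_of_ne
        (R.bary_injective.ne hwv)
      exact R.ec_not_mem_bar u v w hadj hlt_u hlt_v ⟨by omega, by omega⟩
    · exact hwv (R.bary_injective (by omega))
  · rw [getLast?_rightUpRight]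
    simp only [pt, Option.some_inj, Prod.ext_iff]
    omega

theorem adj_iff_exists_isFreeMonotonePath {u v : V} (huv : u ≠ v) :
    G.Adj u v ↔ ∃ l, IsFreeMonotonePath R.free R.pt u v l := by
  wlog hlt : R.bary u < R.bary v generalizing u v
  · have hgt : R.bary v < R.bary u :=
      (lt_or_gt_of_ne (R.bary_injective.ne huv)).resolve_left hlt
    rw [G.adj_comm, this huv.symm hgt]
    exact ⟨fun ⟨l, hl⟩ => ⟨l.reverse, hl.reverse⟩, fun ⟨l, hl⟩ => ⟨l.reverse, hl.reverse⟩⟩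
  exact ⟨fun h => R.exists_isFreeMonotonePath_of_adj h hlt,
    fun ⟨_, hl⟩ => R.adj_of_isFreeMonotonePath hlt hl⟩

end SplitVisibilityRep

theorem planar_visibility_gives_obstacle_rep_general {V : Type*}
    (G : SimpleGraph V)
    (bary barlo barhi px : V → ℤ)
    (hyinj : Function.Injective bary)
    (ec : V → V → ℤ)
    -- the split point of each bar lies on the bar
    (hsplit : ∀ v, barlo v ≤ px v ∧ px v ≤ barhi v)
    -- edge columns attach inside both bars
    (hattach : ∀ u v, G.Adj u v → bary u < bary v →
      (barlo u ≤ ec u v ∧ ec u v ≤ barhi u) ∧ (barlo v ≤ ec u v ∧ ec u v ≤ barhi v))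
    -- downward edges attach on the left part, upward edges on the right part
    (hLR : ∀ u v, G.Adj u v → bary u < bary v → ec u v < px v ∧ px u < ec u v)
    -- edge segments do not cross bars of other vertices
    (hnocross : ∀ u v w, G.Adj u v → bary u < bary v → w ≠ u → w ≠ v →
      bary u < bary w → bary w < bary v → ¬(barlo w ≤ ec u v ∧ ec u v ≤ barhi w)) :
    ∀ u v, u ≠ v → (G.Adj u v ↔
      ∃ l : List (ℤ × ℤ), IsGridPath l ∧ XYMono l ∧
        (∀ p ∈ l, p ∈ VisFreeP G.Adj bary barlo barhi ec) ∧
        (∀ w, w ≠ u → w ≠ v → (2 * px w, 2 * bary w) ∉ l) ∧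
        l.head? = some (2 * px u, 2 * bary u) ∧
        l.getLast? = some (2 * px v, 2 * bary v)) := by
  let R : SplitVisibilityRep G :=
    { bary, barlo, barhi, px, ec
      bary_injective := hyinj
      px_mem_bar := hsplit
      ec_mem_bars := hattach
      ec_lt_px_and_px_lt_ec := hLR
      ec_not_mem_bar := fun u v w huv hw₁ hw₂ => hnocross u v w huv (hw₁.trans hw₂)
        (ne_of_apply_ne bary hw₁.ne') (ne_of_apply_ne bary hw₂.ne) hw₁ hw₂ }
  exact fun u v huv => R.adj_iff_exists_isFreeMonotonePath huv

/-- Given a visibility representation of a planar graph G in which each bar splits at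
the vertex point into a left part (receiving all edges to lower vertices) and a right
part (receiving all edges to higher vertices), with bars at pairwise distinct rows,
doubling the grid and making all points off the drawing obstacles (with vertex points
blocking) yields a grid-obstacle representation: u,v are adjacent iff some xy-monotone
grid path avoiding obstacles and all other vertex points joins their vertex points. -/
theorem planar_visibility_gives_obstacle_rep {V : Type*} [Fintype V]
    (G : SimpleGraph V)
    (bary barlo barhi px : V → ℤ) (hbar : ∀ v, barlo v ≤ barhi v)
    (hyinj : Function.Injective bary)
    (ec : V → V → ℤ) (hecsymm : ∀ u v, ec u v = ec v u)
    -- the split point of each bar lies on the bar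
    (hsplit : ∀ v, barlo v ≤ px v ∧ px v ≤ barhi v)
    -- edge columns attach inside both bars
    (hattach : ∀ u v, G.Adj u v → bary u < bary v →
      (barlo u ≤ ec u v ∧ ec u v ≤ barhi u) ∧ (barlo v ≤ ec u v ∧ ec u v ≤ barhi v))
    -- downward edges attach on the left part, upward edges on the right part
    (hLR : ∀ u v, G.Adj u v → bary u < bary v → ec u v < px v ∧ px u < ec u v)
    -- distinct edges use distinct columns
    (hcoldist : ∀ u v u' v', G.Adj u v → G.Adj u' v' → bary u < bary v →
      bary u' < bary v' → (u, v) ≠ (u', v') → ec u v ≠ ec u' v')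
    -- edge segments do not cross bars of other vertices
    (hnocross : ∀ u v w, G.Adj u v → bary u < bary v → w ≠ u → w ≠ v →
      bary u < bary w → bary w < bary v → ¬(barlo w ≤ ec u v ∧ ec u v ≤ barhi w)) :
    ∀ u v, u ≠ v → (G.Adj u v ↔
      ∃ l : List (ℤ × ℤ), IsGridPath l ∧ XYMono l ∧
        (∀ p ∈ l, p ∈ VisFreeP G.Adj bary barlo barhi ec) ∧
        (∀ w, w ≠ u → w ≠ v → (2 * px w, 2 * bary w) ∉ l) ∧
        l.head? = some (2 * px u, 2 * bary u) ∧
        l.getLast? = some (2 * px v, 2 * bary v)) :=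
  planar_visibility_gives_obstacle_rep_general G bary barlo barhi px hyinj ec hsplit hattach hLR
    hnocross
end
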